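/- A K-linear map δ : A₁ → A₁ is a derivation of the hom-associative Weyl algebra A₁ᵏ, i.e. δ(a * b) = δ(a) * b + a * δ(b) for all a,b ∈ A₁ where a * b := α_k(a·b), if and only if δ is a derivation of A₁ (δ(a·b) = δ(a)·b + a·δ(b) for all a,b ∈ A₁) satisfying α_k(δ(x)) = δ(x) and α_k(δ(y)) = δ(y) + k_p δ(y^p) + k_{2p} δ(y^{2p}) + ⋯ + k_{Mp} δ(y^{Mp}). Moreover, these conditions hold if and only if δ is a derivation of A₁ commuting with α_k (δ ∘ α_k = α_k ∘ δ). -/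

import Mathlib

/-!
Let `x` act on `K[s][t]` as `∂ₜ + s` and `y` as multiplication by `t`. Acting on `1` sends
`yʲxⁱ` to `sⁱtʲ`, so `z ↦ z • 1` is a linear isomorphism `A₁ ≅ K[s][t]`, and it turns `α_k` into
the substitution `t ↦ G(t) = k₀ + t + k_p tᵖ + ⋯`. Since `G` has linear coefficient `1`, this
substitution is injective and `P = 2 P(G)` forces `P = 0` (compare degrees and leading
coefficients). For an endomorphism `α` with these two properties, putting `b = 1` in the twisted
Leibniz rule gives `δ 1 = 2 α (δ 1)`, hence `δ 1 = 0` and `δ ∘ α = α ∘ δ`; injectivity of `α` then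
turns the twisted rule into the ordinary one. Conversely `δ ∘ α` and `α ∘ δ` are both
`α`-twisted derivations, so they agree as soon as they agree on `x` and `y`.
-/

noncomputable section

/-- The defining relation of the first Weyl algebra: `x * y = y * x + 1`. -/
inductive WeylRel (K : Type*) [Field K] :
    FreeAlgebra K (Fin 2) → FreeAlgebra K (Fin 2) → Prop
  | comm : WeylRel K (FreeAlgebra.ι K 0 * FreeAlgebra.ι K 1)
      (FreeAlgebra.ι K 1 * FreeAlgebra.ι K 0 + 1)

/-- The first Weyl algebra `A₁` over `K`: the free unital associative `K`-algebra on two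
generators `x, y` modulo the relation `x·y − y·x = 1`. -/
abbrev Weyl (K : Type*) [Field K] := RingQuot (WeylRel K)

/-- The generator `x` of the first Weyl algebra. -/
def Wx (K : Type*) [Field K] : Weyl K :=
  RingQuot.mkAlgHom K (WeylRel K) (FreeAlgebra.ι K 0)

/-- The generator `y` of the first Weyl algebra. -/
def Wy (K : Type*) [Field K] : Weyl K :=
  RingQuot.mkAlgHom K (WeylRel K) (FreeAlgebra.ι K 1)

open Polynomial

theorem leibniz_yauTwist_iff {A : Type*} [NonAssocSemiring A] (α : A →+* A) (hα : Function.Injective α)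
    (hα₂ : ∀ z, z = α z + α z → z = 0) (δ : A →+ A) :
    (∀ a b, δ (α (a * b)) = α (δ a * b) + α (a * δ b)) ↔
      (∀ a b, δ (a * b) = δ a * b + a * δ b) ∧ ∀ a, δ (α a) = α (δ a) := by
  constructor
  · intro h
    have h_one : δ 1 = 0 := hα₂ _ (by simpa using h 1 1)
    have h_comm : ∀ a, δ (α a) = α (δ a) := fun a ↦ by simpa [h_one] using h a 1
    refine ⟨fun a b ↦ hα ?_, h_comm⟩
    rw [← h_comm, h, map_add]
  · rintro ⟨h_der, h_comm⟩ a b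
    rw [h_comm, h_der, map_add]

theorem LinearMap.ext_of_twisted_leibniz {R A : Type*} [CommRing R] [Ring A] [Algebra R A]
    (φ : A →+* A) {s : Set A} (hs : Algebra.adjoin R s = ⊤) {d₁ d₂ : A →ₗ[R] A}
    (h₁ : ∀ a b, d₁ (a * b) = d₁ a * φ b + φ a * d₁ b)
    (h₂ : ∀ a b, d₂ (a * b) = d₂ a * φ b + φ a * d₂ b) (h : Set.EqOn d₁ d₂ s) : d₁ = d₂ := by
  have map_algebraMap : ∀ (d : A →ₗ[R] A), (∀ a b, d (a * b) = d a * φ b + φ a * d b) →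
      ∀ r, d (algebraMap R A r) = 0 := by
    intro d hd r
    have h_one : d 1 = 0 := by simpa using hd 1 1
    rw [Algebra.algebraMap_eq_smul_one, map_smul, h_one, smul_zero]
  ext a
  induction (hs ▸ Algebra.mem_top : a ∈ Algebra.adjoin R s) using Algebra.adjoin_induction with
  | mem x hx => exact h hx
  | algebraMap r => rw [map_algebraMap d₁ h₁, map_algebraMap d₂ h₂]
  | add x y _ _ hx hy => rw [map_add, map_add, hx, hy]
  | mul x y _ _ hx hy => rw [h₁, h₂, hx, hy]

theorem mul_pow_succ_of_mul_eq_mul_add_one {A : Type*} [Semiring A] {x y : A}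
    (h : x * y = y * x + 1) (m : ℕ) : x * y ^ (m + 1) = y ^ (m + 1) * x + (m + 1) * y ^ m := by
  induction m with
  | zero => simpa using h
  | succ m ih =>
    rw [pow_succ, ← mul_assoc, ih, add_mul, mul_assoc, h, mul_add, ← mul_assoc, ← pow_succ,
      mul_assoc, ← pow_succ]
    push_cast
    noncomm_ring

theorem Submodule.eq_top_of_one_mem_of_mul_mem {R A : Type*} [CommSemiring R] [Semiring A]
    [Algebra R A] {s : Set A} (hs : Algebra.adjoin R s = ⊤) {S : Submodule R A} (h_one : 1 ∈ S)
    (h_mul : ∀ g ∈ s, ∀ z ∈ S, g * z ∈ S) : S = ⊤ := by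
  rw [eq_top_iff, ← Algebra.top_toSubmodule, ← hs, Algebra.adjoin_eq_span, Submodule.span_le]
  intro w hw
  induction hw using Submonoid.closure_induction_left with
  | one => exact h_one
  | mul_left g hg w _ hw => exact h_mul g hg w hw

theorem Polynomial.comp_left_injective {R : Type*} [Ring R] [NoZeroDivisors R] {q : R[X]}
    (hq : 0 < q.natDegree) : Function.Injective fun p : R[X] ↦ p.comp q := by
  intro p₁ p₂ h
  have : (p₁ - p₂).comp q = 0 := by simpa [sub_comp, sub_eq_zero] using h
  rcases comp_eq_zero_iff.mp this with h₀ | ⟨-, hC⟩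
  · exact sub_eq_zero.mp h₀
  · exact absurd (congrArg natDegree hC) (by simpa using hq.ne')

theorem Polynomial.eq_zero_of_eq_comp_add_comp {R : Type*} [CommRing R] [IsDomain R]
    {p q : R[X]} (hq : q.coeff 1 = 1) (h : p = p.comp q + p.comp q) : p = 0 := by
  have hq₀ : q.natDegree ≠ 0 := fun h₀ ↦ by simp [coeff_eq_zero_of_natDegree_lt, h₀] at hq
  by_contra hp
  have h2 : (2 : R) ≠ 0 := by
    rintro h2
    rw [← two_mul, ← C_ofNat, h2, C_0, zero_mul] at h
    exact hp h
  have hpq : p = C 2 * p.comp q := by rw [C_ofNat, two_mul]; exact h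
  have hdeg : p.natDegree = p.natDegree * q.natDegree := by
    conv_lhs => rw [hpq]
    rw [natDegree_C_mul h2, natDegree_comp]
  have hq_lc : q.leadingCoeff ^ p.natDegree = 1 := by
    rcases Nat.eq_zero_or_pos p.natDegree with h₀ | hpos
    · rw [h₀, pow_zero]
    · have hq₁ : q.natDegree = 1 := (Nat.mul_eq_left hpos.ne').mp hdeg.symm
      rw [leadingCoeff, hq₁, hq, one_pow]
  have hlc : p.leadingCoeff = 2 * p.leadingCoeff := by
    conv_lhs => rw [hpq]
    rw [leadingCoeff_mul, leadingCoeff_C, leadingCoeff_comp hq₀, hq_lc, mul_one]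
  exact hp (leadingCoeff_eq_zero.mp (by linear_combination -hlc))

namespace Weyl

variable {K : Type*} [Field K]

theorem x_mul_y : Wx K * Wy K = Wy K * Wx K + 1 := by
  simpa only [map_mul, map_add, map_one, Wx, Wy] using
    RingQuot.mkAlgHom_rel K (WeylRel.comm (K := K))

theorem adjoin_x_y : Algebra.adjoin K {Wx K, Wy K} = ⊤ := by
  have h : {Wx K, Wy K} = RingQuot.mkAlgHom K (WeylRel K) '' Set.range (FreeAlgebra.ι K) := by
    ext; simp [Fin.exists_fin_two, Wx, Wy, eq_comm]
  rw [h, Algebra.adjoin_image, FreeAlgebra.adjoin_range_ι, Algebra.map_top,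
    AlgHom.range_eq_top]
  exact RingQuot.mkAlgHom_surjective K (WeylRel K)

variable (K) in
def monomial (ij : ℕ × ℕ) : Weyl K := Wy K ^ ij.2 * Wx K ^ ij.1

theorem span_monomial : Submodule.span K (Set.range (monomial K)) = ⊤ := by
  refine Submodule.eq_top_of_one_mem_of_mul_mem adjoin_x_y
    (Submodule.subset_span ⟨(0, 0), by simp [monomial]⟩) ?_
  have mem (i j : ℕ) : Wy K ^ j * Wx K ^ i ∈ Submodule.span K (Set.range (monomial K)) :=
    Submodule.subset_span ⟨(i, j), rfl⟩
  rintro g hg z hz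
  induction hz using Submodule.span_induction with
  | mem _ hu =>
    obtain ⟨⟨i, j⟩, rfl⟩ := hu
    rcases hg with rfl | rfl
    · rcases j with _ | j
      · simpa [monomial, pow_succ'] using mem (i + 1) 0
      · rw [monomial, ← mul_assoc, mul_pow_succ_of_mul_eq_mul_add_one x_mul_y, add_mul,
          mul_assoc, ← pow_succ', mul_assoc]
        exact add_mem (mem _ _) (by exact_mod_cast Submodule.smul_of_tower_mem _ (j + 1) (mem i j))
    · simpa [monomial, ← mul_assoc, ← pow_succ'] using mem i (j + 1)
  | zero => simp
  | add _ _ _ _ hu hv => rw [mul_add]; exact add_mem hu hv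
  | smul a _ _ hu => rw [mul_smul_comm]; exact Submodule.smul_mem _ a hu

-- `K[X][X]` stands for `K[s][t]`, with `s = C X` and `t = X`.
def opX : Module.End K K[X][X] :=
  (derivative : K[X][X] →ₗ[K[X]] K[X][X]).restrictScalars K + Algebra.lmul K K[X][X] (C X)

def opY : Module.End K K[X][X] := Algebra.lmul K K[X][X] X

theorem opX_apply (P : K[X][X]) : opX P = derivative P + C X * P := rfl

theorem opY_apply (P : K[X][X]) : opY P = X * P := rfl

theorem opX_mul_opY : (opX * opY : Module.End K K[X][X]) = opY * opX + 1 := by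
  refine LinearMap.ext fun P ↦ ?_
  simp only [Module.End.mul_apply, LinearMap.add_apply, Module.End.one_apply, opX_apply,
    opY_apply, derivative_mul, derivative_X]
  ring

variable (K) in
def rep : Weyl K →ₐ[K] Module.End K K[X][X] :=
  RingQuot.liftAlgHom K ⟨FreeAlgebra.lift K ![opX, opY], by
    rintro _ _ ⟨⟩
    simpa using opX_mul_opY⟩

theorem rep_x : rep K (Wx K) = opX := by
  simp [rep, Wx]

theorem rep_y : rep K (Wy K) = opY := by
  simp [rep, Wy]

variable (K) in
def toPoly : Weyl K →ₗ[K] K[X][X] := LinearMap.applyₗ 1 ∘ₗ (rep K).toLinearMap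

theorem toPoly_apply (z : Weyl K) : toPoly K z = rep K z 1 := rfl

theorem opX_pow_apply_C (i : ℕ) (q : K[X]) : (opX ^ i) (C q) = C (X ^ i * q) := by
  induction i generalizing q with
  | zero => simp
  | succ i ih => rw [pow_succ, Module.End.mul_apply, opX_apply, derivative_C, zero_add, ← C_mul,
      ih, ← mul_assoc, ← pow_succ]

theorem toPoly_monomial (ij : ℕ × ℕ) : toPoly K (monomial K ij) = C (X ^ ij.1) * X ^ ij.2 := by
  rw [toPoly_apply, monomial, map_mul, map_pow, map_pow, rep_x, rep_y, Module.End.mul_apply,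
    ← C_1, opX_pow_apply_C, mul_one, opY, ← map_pow]
  exact mul_comm _ _

theorem smulTower_basisMonomials_apply (ij : ℕ × ℕ) :
    (basisMonomials K).smulTower (basisMonomials K[X]) ij = C (X ^ ij.1) * X ^ ij.2 := by
  simp [Module.Basis.smulTower_apply, smul_eq_C_mul, ← X_pow_eq_monomial]

theorem toPoly_injective : Function.Injective (toPoly K) := by
  let ofPoly := ((basisMonomials K).smulTower (basisMonomials K[X])).constr K (monomial K)
  have h : ofPoly ∘ₗ toPoly K = LinearMap.id := LinearMap.ext_on_range span_monomial fun ij ↦ by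
    rw [LinearMap.comp_apply, toPoly_monomial, ← smulTower_basisMonomials_apply,
      Module.Basis.constr_basis, LinearMap.id_apply]
  exact Function.LeftInverse.injective (g := ofPoly) (LinearMap.congr_fun h)

variable {α : Weyl K →ₐ[K] Weyl K} {f : K[X]}

theorem toPoly_map_eq_comp (hx : α (Wx K) = Wx K) (hy : α (Wy K) = aeval (Wy K) f) (z : Weyl K) :
    toPoly K (α z) = (toPoly K z).comp (f.map C) := by
  have hy' : rep K (α (Wy K)) = Algebra.lmul K K[X][X] (f.map C) := by
    rw [hy, ← aeval_algHom_apply, rep_y, opY, aeval_algHom_apply, ← algebraMap_eq,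
      ← aeval_map_algebraMap K[X], aeval_X_left_apply]
  induction (span_monomial (K := K) ▸ Submodule.mem_top : z ∈ _) using Submodule.span_induction
    with
  | mem _ hu =>
    obtain ⟨⟨i, j⟩, rfl⟩ := hu
    rw [toPoly_monomial, monomial, map_mul, map_pow, map_pow, hx, toPoly_apply, map_mul,
      map_pow, map_pow, rep_x, hy', Module.End.mul_apply, ← C_1, opX_pow_apply_C, mul_one,
      ← map_pow, mul_comp, C_comp, X_pow_comp]
    exact mul_comm _ _
  | zero => simp
  | add _ _ _ _ hu hv => rw [map_add, map_add, map_add, add_comp, hu, hv]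
  | smul a _ _ hu => rw [map_smul, map_smul, map_smul, smul_comp, hu]

theorem injective_of_map_eq_aeval (hx : α (Wx K) = Wx K) (hy : α (Wy K) = aeval (Wy K) f)
    (hf : 0 < f.natDegree) : Function.Injective α := by
  intro a b h
  apply toPoly_injective
  apply comp_left_injective (q := f.map C) (by simpa using hf)
  simp only [← toPoly_map_eq_comp hx hy, h]

theorem eq_zero_of_eq_map_add_map (hx : α (Wx K) = Wx K) (hy : α (Wy K) = aeval (Wy K) f)
    (hf : f.coeff 1 = 1) {z : Weyl K} (h : z = α z + α z) : z = 0 := by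
  apply toPoly_injective
  rw [map_zero]
  apply eq_zero_of_eq_comp_add_comp (q := f.map C) (by simp [hf])
  conv_lhs => rw [h]
  rw [map_add, toPoly_map_eq_comp hx hy]

theorem comm_iff_comm_x_y (α : Weyl K →ₐ[K] Weyl K) {δ : Weyl K →ₗ[K] Weyl K}
    (h_der : ∀ a b, δ (a * b) = δ a * b + a * δ b) :
    (∀ a, δ (α a) = α (δ a)) ↔ δ (α (Wx K)) = α (δ (Wx K)) ∧ δ (α (Wy K)) = α (δ (Wy K)) := by
  refine ⟨fun h ↦ ⟨h _, h _⟩, fun ⟨h_x, h_y⟩ a ↦ ?_⟩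
  refine LinearMap.congr_fun (LinearMap.ext_of_twisted_leibniz (α : Weyl K →+* Weyl K)
    adjoin_x_y (d₁ := δ ∘ₗ α.toLinearMap) (d₂ := α.toLinearMap ∘ₗ δ)
    (by simp [h_der]) (by simp [h_der]) ?_) a
  rintro _ (rfl | rfl)
  exacts [h_x, h_y]

end Weyl

theorem homWeyl_derivation_iff_general (K : Type*) [Field K] (p : ℕ) (hp : p.Prime)
    (M : ℕ) (k : ℕ → K) (α : Weyl K →ₐ[K] Weyl K)
    (hx : α (Wx K) = Wx K)
    (hy : α (Wy K) = Wy K + ∑ i ∈ Finset.range (M + 1), k i • (Wy K) ^ (i * p))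
    (δ : Weyl K →ₗ[K] Weyl K) :
    ((∀ a b : Weyl K, δ (α (a * b)) = α (δ a * b) + α (a * δ b)) ↔
      ((∀ a b : Weyl K, δ (a * b) = δ a * b + a * δ b) ∧
        α (δ (Wx K)) = δ (Wx K) ∧
        α (δ (Wy K)) = δ (Wy K) + ∑ i ∈ Finset.Icc 1 M, k i • δ ((Wy K) ^ (i * p)))) ∧
    ((∀ a b : Weyl K, δ (α (a * b)) = α (δ a * b) + α (a * δ b)) ↔
      ((∀ a b : Weyl K, δ (a * b) = δ a * b + a * δ b) ∧
        ∀ a : Weyl K, δ (α a) = α (δ a))) := by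
  set f : K[X] := X + ∑ i ∈ Finset.range (M + 1), k i • X ^ (i * p)
  have hf : f.coeff 1 = 1 := by
    simp [f, coeff_X, coeff_X_pow, eq_comm (a := 1), mul_eq_one, hp.ne_one]
  have hαy : α (Wy K) = aeval (Wy K) f := by simp [f, hy]
  have hom_iff := leibniz_yauTwist_iff (α : Weyl K →+* Weyl K)
    (Weyl.injective_of_map_eq_aeval hx hαy (le_natDegree_of_ne_zero (by simp [hf])))
    (fun _ ↦ Weyl.eq_zero_of_eq_map_add_map hx hαy hf) δ
  have comm_iff : (∀ a b, δ (a * b) = δ a * b + a * δ b) → ((∀ a, δ (α a) = α (δ a)) ↔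
      α (δ (Wx K)) = δ (Wx K) ∧
        α (δ (Wy K)) = δ (Wy K) + ∑ i ∈ Finset.Icc 1 M, k i • δ ((Wy K) ^ (i * p))) := by
    intro h_der
    have h_one : δ 1 = 0 := by simpa using h_der 1 1
    have hδy : δ (α (Wy K)) = δ (Wy K) + ∑ i ∈ Finset.Icc 1 M, k i • δ ((Wy K) ^ (i * p)) := by
      rw [hy, map_add, map_sum, Finset.sum_range_eq_add_Ico _ (by omega),
        Finset.Ico_add_one_right_eq_Icc]
      simp [h_one]
    rw [Weyl.comm_iff_comm_x_y α h_der, hx, hδy]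
    exact and_congr eq_comm eq_comm
  exact ⟨hom_iff.trans (and_congr_right comm_iff), hom_iff⟩

/-- A `K`-linear map `δ` is a derivation of the hom-associative Weyl algebra `A₁ᵏ`
(with product `a * b := α_k (a·b)`) if and only if `δ` is a derivation of `A₁` satisfying
`α_k (δ x) = δ x` and `α_k (δ y) = δ y + k_p δ(y^p) + ⋯ + k_{Mp} δ(y^{Mp})`; moreover,
these hold if and only if `δ` is a derivation of `A₁` commuting with `α_k`. -/
theorem homWeyl_derivation_iff (K : Type*) [Field K] (p : ℕ) (hp : p.Prime)
    [CharP K p] (M : ℕ) (k : ℕ → K) (α : Weyl K →ₐ[K] Weyl K)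
    (hx : α (Wx K) = Wx K)
    (hy : α (Wy K) = Wy K + ∑ i ∈ Finset.range (M + 1), k i • (Wy K) ^ (i * p))
    (δ : Weyl K →ₗ[K] Weyl K) :
    ((∀ a b : Weyl K, δ (α (a * b)) = α (δ a * b) + α (a * δ b)) ↔
      ((∀ a b : Weyl K, δ (a * b) = δ a * b + a * δ b) ∧
        α (δ (Wx K)) = δ (Wx K) ∧
        α (δ (Wy K)) = δ (Wy K) + ∑ i ∈ Finset.Icc 1 M, k i • δ ((Wy K) ^ (i * p)))) ∧
    ((∀ a b : Weyl K, δ (α (a * b)) = α (δ a * b) + α (a * δ b)) ↔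
      ((∀ a b : Weyl K, δ (a * b) = δ a * b + a * δ b) ∧
        ∀ a : Weyl K, δ (α a) = α (δ a))) :=
  homWeyl_derivation_iff_general K p hp M k α hx hy δ
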